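/- arXiv:2103.10684 — 6 statements merged into one kernel-verified Lean document; each statement's English description precedes it below -/
import Mathlib

section
/- For every ε > 0 there exists t₀ such that for every t ≥ t₀ there is a finite simple graph G that admits no K_t-minor but admits a frozen proper ⌈(3/2-ε)t⌉-colouring. -/
/-!
Take `k = ⌈(3/2 - ε) t⌉` parts of two vertices each, join any two vertices in different parts,
and then delete one edge between every two parts. Colouring by parts is frozen, since two parts
span `K_{2,2}` minus an edge, a path. The bags of a `K_t`-minor are disjoint subsets of the `2k`
vertices, so at least `(3t - 2k)/2 ≈ εt` of them have at most two vertices; such a bag is a vertex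
or an edge, and a third of these bags meet pairwise distinct parts. If the deleted edges are
chosen at random, two such bags are non-adjacent with probability at least `4⁻¹⁶`, independently
over the pairs of bags, so by a union bound some choice admits no `m = O(log k)` pairwise
adjacent ones; as `m = o(t)`, there is no `K_t`-minor.
-/

/-- `B` is a family of bags witnessing a `K_t`-minor of `G`. -/
def IsKMinorBags {V : Type*} (G : SimpleGraph V) {t : ℕ} (B : Fin t → Set V) : Prop :=
  (∀ i, (B i).Nonempty) ∧
  (Pairwise fun i j => Disjoint (B i) (B j)) ∧
  (∀ i, (G.induce (B i)).Connected) ∧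
  (∀ i j, i ≠ j → ∃ u ∈ B i, ∃ v ∈ B j, G.Adj u v)

/-- `G` admits a `K_t`-minor. -/
def HasKMinor {V : Type*} (G : SimpleGraph V) (t : ℕ) : Prop :=
  ∃ B : Fin t → Set V, IsKMinorBags G B

/-- `α` is a proper colouring of `G` with colours in `Fin k`. -/
def IsProperColoring {V : Type*} (G : SimpleGraph V) {k : ℕ} (α : V → Fin k) : Prop :=
  ∀ u v, G.Adj u v → α u ≠ α v

/-- A colouring is frozen if every colour class is nonempty and the union of any two
distinct colour classes induces a connected subgraph of `G`. -/
def IsFrozen {V : Type*} (G : SimpleGraph V) {k : ℕ} (α : V → Fin k) : Prop :=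
  (∀ c : Fin k, {v | α v = c}.Nonempty) ∧
  (∀ c₁ c₂ : Fin k, c₁ ≠ c₂ → (G.induce {v | α v = c₁ ∨ α v = c₂}).Connected)

open Finset

section BlockCounting

variable {ι κ Y : Type*} [Fintype ι] [DecidableEq ι] [Fintype κ] [DecidableEq κ] [Fintype Y]
  [DecidableEq Y]

theorem card_filter_forall_exists_ne (o : ι → κ) (w : ι → Y) (T : Finset κ) :
    #{f : ι → Y | ∀ σ ∈ T, ∃ x, o x = σ ∧ f x ≠ w x} =
      ∏ σ, if σ ∈ T then Fintype.card Y ^ Fintype.card {x // o x = σ} - 1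
        else Fintype.card Y ^ Fintype.card {x // o x = σ} := by
  let e : (ι → Y) ≃ ∀ σ, ({x // o x = σ} → Y) :=
    (Equiv.arrowCongr (Equiv.sigmaFiberEquiv o).symm (Equiv.refl Y)).trans
      (Equiv.piCurry fun _ _ => Y)
  have he : ∀ f, (∀ σ ∈ T, ∃ x, o x = σ ∧ f x ≠ w x) ↔
      ∀ σ, σ ∈ T → e f σ ≠ fun x => w x.1 := by
    intro f
    refine forall_congr' fun σ => imp_congr_right fun _ => ?_
    simp only [ne_eq, funext_iff, not_forall, Subtype.exists]
    exact exists_congr fun x => ⟨fun ⟨h, hne⟩ => ⟨h, hne⟩, fun ⟨h, hne⟩ => ⟨h, hne⟩⟩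
  rw [← Fintype.card_subtype, Fintype.card_congr ((e.subtypeEquiv he).trans
    (Equiv.subtypePiEquivPi (p := fun σ g => σ ∈ T → g ≠ fun x => w x.1))), Fintype.card_pi]
  refine prod_congr rfl fun σ _ => ?_
  split_ifs with hσ
  · simp [hσ, Fintype.card_subtype_compl]
  · simp [hσ]

theorem card_filter_forall_exists_ne_le (o : ι → κ) (w : ι → Y) (T : Finset κ) {N : ℕ}
    (hN : ∀ σ ∈ T, Fintype.card Y ^ Fintype.card {x // o x = σ} ≤ N) :
    (#{f : ι → Y | ∀ σ ∈ T, ∃ x, o x = σ ∧ f x ≠ w x} : ℝ) ≤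
      Fintype.card Y ^ Fintype.card ι * (1 - 1 / N) ^ #T := by
  have hcard : Fintype.card ι = ∑ σ, Fintype.card {x // o x = σ} := by
    rw [← Fintype.card_sigma, Fintype.card_congr (Equiv.sigmaFiberEquiv o)]
  have hfactor : ∀ a : ℕ, a ≤ N → ((a - 1 : ℕ) : ℝ) ≤ a * (1 - 1 / N) := by
    intro a haN
    rcases Nat.eq_zero_or_pos a with rfl | ha
    · simp
    rw [Nat.cast_sub ha, mul_one_sub, mul_one_div, Nat.cast_one]
    have : (a : ℝ) / N ≤ 1 := div_le_one_of_le₀ (by exact_mod_cast haN) (Nat.cast_nonneg N)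
    linarith
  have hpow : (1 - 1 / N : ℝ) ^ #T = ∏ σ, if σ ∈ T then 1 - 1 / (N : ℝ) else 1 := by
    rw [prod_ite_mem, univ_inter, prod_const]
  rw [card_filter_forall_exists_ne, Nat.cast_prod, hcard, ← prod_pow_eq_pow_sum, hpow,
    ← prod_mul_distrib]
  refine prod_le_prod (fun σ _ => by positivity) fun σ _ => ?_
  split_ifs with hσ
  · exact_mod_cast hfactor _ (hN σ hσ)
  · push_cast; rw [mul_one]

end BlockCounting

theorem SimpleGraph.exists_isIndepSet_subset_of_degree_le {α : Type*} [DecidableEq α]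
    (G : SimpleGraph α) [DecidableRel G.Adj] {d : ℕ} (S : Finset α)
    (hS : ∀ a ∈ S, #{b ∈ S | G.Adj a b} ≤ d) :
    ∃ I ⊆ S, G.IsIndepSet I ∧ #S ≤ (d + 1) * #I := by
  induction S using Finset.strongInduction with
  | H S ih =>
  rcases S.eq_empty_or_nonempty with rfl | ⟨a, ha⟩
  · exact ⟨∅, empty_subset _, by simp, by simp⟩
  set R := S \ insert a {b ∈ S | G.Adj a b}
  have haR : a ∉ R := fun h => (mem_sdiff.mp h).2 (mem_insert_self _ _)
  have hRS : R ⊂ S := ssubset_of_subset_of_ne sdiff_subset fun h => haR (h ▸ ha)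
  obtain ⟨I, hIR, hI, hcard⟩ := ih R hRS fun b hb =>
    (card_le_card (filter_subset_filter _ hRS.subset)).trans (hS b (hRS.subset hb))
  refine ⟨insert a I, insert_subset ha (hIR.trans hRS.subset), ?_, ?_⟩
  · have hnadj : ∀ b ∈ I, ¬G.Adj a b := fun b hb hab => (mem_sdiff.mp (hIR hb)).2
      (mem_insert_of_mem (mem_filter.mpr ⟨(mem_sdiff.mp (hIR hb)).1, hab⟩))
    rw [coe_insert, SimpleGraph.IsIndepSet, Set.pairwise_insert]
    exact ⟨hI, fun b hb _ => ⟨hnadj b hb, fun hba => hnadj b hb hba.symm⟩⟩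
  · have hSR : #S ≤ #R + (d + 1) :=
      card_le_card_sdiff_add_card.trans (Nat.add_le_add_left ((card_insert_le _ _).trans
        (Nat.add_le_add_right (hS a ha) 1)) _)
    rw [card_insert_of_notMem fun h => haR (hIR h), mul_add_one]
    omega

theorem SimpleGraph.adj_of_connected_induce_subset_pair {V : Type*} {G : SimpleGraph V}
    {B : Set V} (hB : (G.induce B).Connected) {u v : V} (hu : u ∈ B) (hv : v ∈ B) (huv : u ≠ v)
    (hBuv : B ⊆ {u, v}) : G.Adj u v := by
  have : Nontrivial B := ⟨⟨u, hu⟩, ⟨v, hv⟩, fun h => huv (congrArg Subtype.val h)⟩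
  obtain ⟨w, hw⟩ := hB.preconnected.exists_adj_of_nontrivial ⟨u, hu⟩
  rcases hBuv w.2 with h | h
  · exact absurd (h ▸ hw : G.Adj u u) (G.loopless.irrefl u)
  · exact (h ▸ hw : G.Adj u v)

theorem three_mul_card_le_card_add_two_mul_card_filter {ι V : Type*} [Fintype ι] [Fintype V]
    [DecidableEq V] (B : ι → Finset V) (hne : ∀ i, (B i).Nonempty)
    (hdisj : Pairwise (Function.onFun Disjoint B)) :
    3 * Fintype.card ι ≤ Fintype.card V + 2 * #{i | #(B i) ≤ 2} := by
  have hsum : ∑ i, #(B i) ≤ Fintype.card V := by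
    rw [← card_biUnion fun i _ j _ hij => hdisj hij]
    exact card_le_univ _
  have hbag : ∀ i, 3 ≤ #(B i) + if #(B i) ≤ 2 then 2 else 0 := by
    intro i
    have := (hne i).card_pos
    split_ifs <;> omega
  have := sum_le_sum fun i (_ : i ∈ univ) => hbag i
  rw [sum_const, card_univ, smul_eq_mul, sum_add_distrib, ← sum_filter, sum_const,
    smul_eq_mul] at this
  omega

theorem pow_mul_one_sub_inv_pow_choose_two_lt_one {a m N : ℕ} (hN : 0 < N)
    (hm : 2 * N * Real.log a + 1 < m) : (a : ℝ) ^ m * (1 - 1 / N) ^ m.choose 2 < 1 := by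
  have hNR : (0 : ℝ) < N := Nat.cast_pos.mpr hN
  have hlog := Real.log_natCast_nonneg a
  have hm1 : (1 : ℝ) < m := by nlinarith
  rcases Nat.eq_zero_or_pos a with rfl | ha
  · have hm0 : m ≠ 0 := by rintro rfl; norm_num at hm1
    simp [hm0]
  have hq : (1 - 1 / N : ℝ) ^ m.choose 2 ≤ Real.exp (-(m.choose 2 : ℝ) / N) := by
    calc (1 - 1 / N : ℝ) ^ m.choose 2 ≤ Real.exp (-(1 / N)) ^ m.choose 2 :=
          pow_le_pow_left₀ (sub_nonneg.mpr (div_le_one_of_le₀ (by exact_mod_cast hN) hNR.le))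
            (Real.one_sub_le_exp_neg _) _
      _ = Real.exp (-(m.choose 2 : ℝ) / N) := by rw [← Real.exp_nat_mul]; ring_nf
  have hpow : (a : ℝ) ^ m = Real.exp (m * Real.log a) := by
    rw [Real.exp_nat_mul, Real.exp_log (Nat.cast_pos.mpr ha)]
  have hexp : (m : ℝ) * Real.log a - m.choose 2 / N < 0 := by
    rw [Nat.cast_choose_two, sub_neg, div_div, lt_div_iff₀ (by positivity)]
    nlinarith
  calc (a : ℝ) ^ m * (1 - 1 / N) ^ m.choose 2
      ≤ Real.exp (m * Real.log a) * Real.exp (-(m.choose 2 : ℝ) / N) := by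
        rw [hpow]; gcongr
    _ = Real.exp ((m : ℝ) * Real.log a - m.choose 2 / N) := by rw [← Real.exp_add]; ring_nf
    _ < 1 := Real.exp_lt_one_iff.mpr hexp

theorem Real.log_natCast_le_log_natCast {a b : ℕ} (h : a ≤ b) : Real.log a ≤ Real.log b := by
  rcases Nat.eq_zero_or_pos a with rfl | ha
  · simpa using Real.log_natCast_nonneg b
  · exact Real.log_le_log (by positivity) (by exact_mod_cast h)

open Filter Asymptotics in
theorem eventually_mul_log_add_le (a b : ℝ) {δ : ℝ} (hδ : 0 < δ) :
    ∀ᶠ t : ℕ in atTop, a * Real.log t + b ≤ δ * t := by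
  have hlo : (fun t : ℝ => a * Real.log t + b) =o[atTop] id :=
    (Real.isLittleO_log_id_atTop.const_mul_left a).add (isLittleO_const_id_atTop b)
  filter_upwards [(hlo.comp_tendsto tendsto_natCast_atTop_atTop).bound hδ] with t ht
  simpa using (le_abs_self _).trans ht

open Filter in
theorem eventually_exists_parameters {ε : ℝ} (hε : 0 < ε) {C : ℝ} (hC : 0 ≤ C) :
    ∀ᶠ t : ℕ in atTop, ∃ m : ℕ,
      C * Real.log ((2 * ⌈(3 / 2 - ε) * t⌉₊) ^ 2 : ℕ) + 1 < m ∧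
      2 * ⌈(3 / 2 - ε) * t⌉₊ + 6 * m < 3 * t + 6 := by
  -- `δ ≤ 1` keeps `(3/2 - δ) t ≥ 0`, which also covers `ε > 3/2`, where the ceiling is `0`.
  set δ := min ε 1
  have hδ : 0 < δ := lt_min hε one_pos
  filter_upwards [eventually_ge_atTop 2, eventually_mul_log_add_le (12 * C)
    (12 * C * Real.log 4 + 18) (by positivity : (0 : ℝ) < 2 * δ)] with t ht hlin
  have htR : (2 : ℝ) ≤ t := by exact_mod_cast ht
  set k := ⌈(3 / 2 - ε) * t⌉₊
  have hk : (k : ℝ) < (3 / 2 - δ) * t + 1 := by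
    have hle : (3 / 2 - ε) * (t : ℝ) ≤ (3 / 2 - δ) * t :=
      mul_le_mul_of_nonneg_right (by linarith [min_le_left ε 1]) (Nat.cast_nonneg t)
    have hy : 0 ≤ (3 / 2 - δ) * (t : ℝ) :=
      mul_nonneg (by linarith [min_le_right ε 1]) (Nat.cast_nonneg t)
    exact (Nat.cast_le.mpr (Nat.ceil_mono hle)).trans_lt (Nat.ceil_lt_add_one hy)
  have hkt : 2 * k ≤ 4 * t := by
    have : (2 * k : ℝ) ≤ 4 * t := by linarith [mul_nonneg hδ.le (Nat.cast_nonneg t)]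
    exact_mod_cast this
  have hlogk : Real.log ((2 * k) ^ 2 : ℕ) ≤ 2 * (Real.log 4 + Real.log t) := calc
    _ ≤ Real.log ((4 * t) ^ 2 : ℕ) := Real.log_natCast_le_log_natCast (Nat.pow_le_pow_left hkt 2)
    _ = _ := by
      push_cast
      rw [Real.log_pow, Real.log_mul (by norm_num) (by positivity)]
      norm_num
  have hceil := Nat.ceil_lt_add_one (by positivity : 0 ≤ C * (2 * (Real.log 4 + Real.log t)))
  refine ⟨⌈C * (2 * (Real.log 4 + Real.log t))⌉₊ + 2, ?_, ?_⟩
  · have := Nat.le_ceil (C * (2 * (Real.log 4 + Real.log t)))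
    have := mul_le_mul_of_nonneg_left hlogk hC
    rw [Nat.cast_add, Nat.cast_ofNat]
    linarith
  · suffices (2 * k + 6 * (⌈C * (2 * (Real.log 4 + Real.log t))⌉₊ + 2) : ℝ) < 3 * t + 6 by
      exact_mod_cast this
    linarith

namespace FrozenMinor

open scoped Classical

variable {k : ℕ}

/-- The complete `k`-partite graph with parts `{p} × Bool`, minus, for every two parts `p < q`,
the edge between `(p, (f (p, q)).1)` and `(q, (f (p, q)).2)`. -/
def removalGraph (f : Fin k × Fin k → Bool × Bool) : SimpleGraph (Fin k × Bool) where
  Adj u v := u.1 ≠ v.1 ∧ (u.1 < v.1 → f (u.1, v.1) ≠ (u.2, v.2)) ∧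
    (v.1 < u.1 → f (v.1, u.1) ≠ (v.2, u.2))
  symm := ⟨fun _ _ h => ⟨h.1.symm, h.2.2, h.2.1⟩⟩
  loopless := ⟨fun _ h => h.1 rfl⟩

section Colouring

variable (f : Fin k × Fin k → Bool × Bool)

theorem removalGraph_adj {u v : Fin k × Bool} :
    (removalGraph f).Adj u v ↔ u.1 ≠ v.1 ∧ (u.1 < v.1 → f (u.1, v.1) ≠ (u.2, v.2)) ∧
      (v.1 < u.1 → f (v.1, u.1) ≠ (v.2, u.2)) :=
  Iff.rfl

theorem removalGraph_adj_of_lt {u v : Fin k × Bool} (h : u.1 < v.1) :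
    (removalGraph f).Adj u v ↔ f (u.1, v.1) ≠ (u.2, v.2) :=
  ⟨fun hadj => ((removalGraph_adj f).mp hadj).2.1 h,
    fun hf => ⟨h.ne, fun _ => hf, fun h' => absurd h (lt_asymm h')⟩⟩

theorem isProperColoring_fst : IsProperColoring (removalGraph f) Prod.fst :=
  fun _ _ h => ((removalGraph_adj f).mp h).1

theorem connected_induce_parts_of_lt {p q : Fin k} (hpq : p < q) :
    ((removalGraph f).induce {v | v.1 = p ∨ v.1 = q}).Connected := by
  set G := (removalGraph f).induce {v : Fin k × Bool | v.1 = p ∨ v.1 = q}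
  rcases hf : f (p, q) with ⟨a, b⟩
  have hcross : ∀ i j, (i, j) ≠ (a, b) → G.Adj ⟨(p, i), Or.inl rfl⟩ ⟨(q, j), Or.inr rfl⟩ :=
    fun i j hij => (removalGraph_adj_of_lt f hpq).mpr (hf ▸ hij.symm)
  have hhub : ∀ v : {v : Fin k × Bool | v.1 = p ∨ v.1 = q},
      G.Reachable v ⟨(q, !b), Or.inr rfl⟩ := by
    rintro ⟨⟨r, i⟩, rfl | rfl⟩
    · exact (hcross i (!b) (by simp)).reachable
    · rcases Bool.eq_or_eq_not i b with rfl | rfl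
      · exact (hcross (!a) i (by simp)).symm.reachable.trans (hcross (!a) (!i) (by simp)).reachable
      · rfl
  exact (SimpleGraph.connected_iff _).mpr
    ⟨fun u v => (hhub u).trans (hhub v).symm, ⟨⟨(q, !b), Or.inr rfl⟩⟩⟩

theorem isFrozen_fst : IsFrozen (removalGraph f) Prod.fst := by
  refine ⟨fun c => ⟨(c, false), rfl⟩, fun c₁ c₂ hne => ?_⟩
  rcases hne.lt_or_gt with h | h
  · exact connected_induce_parts_of_lt f h
  · rw [show {v : Fin k × Bool | v.1 = c₁ ∨ v.1 = c₂} = {v | v.1 = c₂ ∨ v.1 = c₁} from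
      Set.ext fun _ => or_comm]
    exact connected_induce_parts_of_lt f h

end Colouring

def smallSets : Finset (Finset (Fin k × Bool)) :=
  univ.image fun e : (Fin k × Bool) × (Fin k × Bool) => {e.1, e.2}

theorem card_smallSets_le : #(smallSets (k := k)) ≤ (2 * k) ^ 2 :=
  card_image_le.trans (by simp [sq, mul_comm])

theorem card_le_two_of_mem_smallSets {s : Finset (Fin k × Bool)} (hs : s ∈ smallSets) : #s ≤ 2 := by
  obtain ⟨e, -, rfl⟩ := mem_image.mp hs
  exact card_le_two

theorem mem_smallSets {s : Finset (Fin k × Bool)} (hne : s.Nonempty) (hs : #s ≤ 2) :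
    s ∈ smallSets := by
  have := hne.card_pos
  obtain ⟨u, v, rfl⟩ : ∃ u v, s = {u, v} := by
    interval_cases h : #s
    · obtain ⟨u, rfl⟩ := card_eq_one.mp h
      exact ⟨u, u, by simp⟩
    · obtain ⟨u, v, -, rfl⟩ := card_eq_two.mp h
      exact ⟨u, v, rfl⟩
  exact mem_image.mpr ⟨(u, v), mem_univ _, rfl⟩

def IsPartDisjoint (F : Finset (Finset (Fin k × Bool))) : Prop :=
  (F : Set (Finset (Fin k × Bool))).Pairwise
    (fun s t => Disjoint (s.image Prod.fst) (t.image Prod.fst)) ∧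
  ∀ s ∈ F, Set.InjOn Prod.fst (s : Set (Fin k × Bool))

def IsPairwiseAdjacent (f : Fin k × Fin k → Bool × Bool) (F : Finset (Finset (Fin k × Bool))) :
    Prop :=
  (F : Set (Finset (Fin k × Bool))).Pairwise fun s t => ∃ u ∈ s, ∃ v ∈ t, (removalGraph f).Adj u v

def AdjacentFamiliesBelow (f : Fin k × Fin k → Bool × Bool) (m : ℕ) : Prop :=
  ∀ F ⊆ smallSets, IsPartDisjoint F → IsPairwiseAdjacent f F → #F < m

def side (F : Finset (Finset (Fin k × Bool))) (p : Fin k) : Bool :=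
  decide (∃ s ∈ F, (p, true) ∈ s)

/-- The members of `F` meeting the parts `x.1` or `x.2`. For a part-disjoint `F` the blocks
`{x | owner F x = {s, t}}` of distinct pairs are disjoint, and if `s ≠ t` are adjacent in
`removalGraph f` then `f` differs from `(side F x.1, side F x.2)` somewhere on their block. -/
def owner (F : Finset (Finset (Fin k × Bool))) (x : Fin k × Fin k) :
    Finset (Finset (Fin k × Bool)) :=
  {s ∈ F | x.1 ∈ s.image Prod.fst ∨ x.2 ∈ s.image Prod.fst}

namespace IsPartDisjoint

variable {F : Finset (Finset (Fin k × Bool))} (hF : IsPartDisjoint F)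
include hF

theorem mono {F' : Finset (Finset (Fin k × Bool))} (h : F' ⊆ F) : IsPartDisjoint F' :=
  ⟨hF.1.mono (coe_subset.mpr h), fun s hs => hF.2 s (h hs)⟩

theorem eq_of_mem {s t : Finset (Fin k × Bool)} {u : Fin k × Bool} (hs : s ∈ F) (ht : t ∈ F)
    (hu : u ∈ s) (hut : u.1 ∈ t.image Prod.fst) : s = t := by
  by_contra hst
  exact disjoint_left.mp (hF.1 hs ht hst) (mem_image_of_mem _ hu) hut

theorem side_fst {s : Finset (Fin k × Bool)} {u : Fin k × Bool} (hs : s ∈ F) (hu : u ∈ s) :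
    side F u.1 = u.2 := by
  obtain ⟨p, _ | _⟩ := u
  · simp only [side, decide_eq_false_iff_not, not_exists, not_and]
    intro t ht hpt
    obtain rfl := hF.eq_of_mem ht hs hpt (mem_image_of_mem Prod.fst hu : p ∈ _)
    simpa using hF.2 t ht hpt hu rfl
  · simpa [side] using ⟨s, hs, hu⟩

theorem owner_eq {s t : Finset (Fin k × Bool)} {u v : Fin k × Bool} (hs : s ∈ F) (ht : t ∈ F)
    (hu : u ∈ s) (hv : v ∈ t) : owner F (u.1, v.1) = {s, t} := by
  ext r
  simp only [owner, mem_filter, mem_insert, mem_singleton]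
  constructor
  · rintro ⟨hr, h | h⟩
    · exact Or.inl (hF.eq_of_mem hs hr hu h).symm
    · exact Or.inr (hF.eq_of_mem ht hr hv h).symm
  · rintro (rfl | rfl)
    · exact ⟨hs, Or.inl (mem_image_of_mem _ hu)⟩
    · exact ⟨ht, Or.inr (mem_image_of_mem _ hv)⟩

theorem card_owner_fiber_le (hFt : F ⊆ smallSets) {σ : Finset (Finset (Fin k × Bool))}
    (hσ : σ ∈ F.powersetCard 2) : Fintype.card {x // owner F x = σ} ≤ 16 := by
  obtain ⟨hσF, hσ2⟩ := mem_powersetCard.mp hσ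
  obtain ⟨s, t, hst, rfl⟩ := card_eq_two.mp hσ2
  have hs : s ∈ F := hσF (by simp)
  have ht : t ∈ F := hσF (by simp)
  set U := (s ∪ t).image Prod.fst
  have hU : #U ≤ 4 := card_image_le.trans ((card_union_le _ _).trans (Nat.add_le_add
    (card_le_two_of_mem_smallSets (hFt hs)) (card_le_two_of_mem_smallSets (hFt ht))))
  have hfiber : ∀ x, owner F x = {s, t} → x.1 ∈ U ∧ x.2 ∈ U := by
    intro x hx
    have hmem : ∀ r ∈ ({s, t} : Finset _), x.1 ∈ r.image Prod.fst ∨ x.2 ∈ r.image Prod.fst :=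
      fun r hr => (mem_filter.mp (show r ∈ owner F x from hx ▸ hr)).2
    have hdisj := disjoint_left.mp (hF.1 hs ht hst)
    have := hmem s (by simp)
    have := hmem t (by simp)
    have := @hdisj x.1
    have := @hdisj x.2
    simp only [U, image_union, mem_union]
    tauto
  calc Fintype.card {x // owner F x = {s, t}} = #{x | owner F x = {s, t}} :=
        Fintype.card_subtype _
    _ ≤ #(U ×ˢ U) := card_le_card fun x hx => mem_product.mpr (hfiber x (mem_filter.mp hx).2)
    _ ≤ 16 := by rw [card_product]; exact Nat.mul_le_mul hU hU

theorem card_isPairwiseAdjacent_le (hFt : F ⊆ smallSets) :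
    (#{f | IsPairwiseAdjacent f F} : ℝ) ≤ 4 ^ (k * k) * (1 - 1 / 4 ^ 16) ^ (#F).choose 2 := by
  set E : Finset (Fin k × Fin k → Bool × Bool) :=
    {f | ∀ σ ∈ F.powersetCard 2, ∃ x, owner F x = σ ∧ f x ≠ (side F x.1, side F x.2)}
  have hsub : ({f | IsPairwiseAdjacent f F} : Finset _) ⊆ E := by
    intro f hf
    rw [mem_filter] at hf ⊢
    refine ⟨mem_univ _, fun σ hσ => ?_⟩
    obtain ⟨hσF, hσ2⟩ := mem_powersetCard.mp hσ
    obtain ⟨s, t, hst, rfl⟩ := card_eq_two.mp hσ2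
    have hs : s ∈ F := hσF (by simp)
    have ht : t ∈ F := hσF (by simp)
    obtain ⟨u, hu, v, hv, huv⟩ := hf.2 hs ht hst
    obtain ⟨hne, hlt, hgt⟩ := (removalGraph_adj f).mp huv
    rcases hne.lt_or_gt with h | h
    · refine ⟨(u.1, v.1), hF.owner_eq hs ht hu hv, ?_⟩
      rw [hF.side_fst hs hu, hF.side_fst ht hv]
      exact hlt h
    · refine ⟨(v.1, u.1), by rw [hF.owner_eq ht hs hv hu, pair_comm], ?_⟩
      rw [hF.side_fst hs hu, hF.side_fst ht hv]
      exact hgt h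
  have hE := card_filter_forall_exists_ne_le (owner F) (fun x => (side F x.1, side F x.2))
    (F.powersetCard 2) (N := 4 ^ 16) fun σ hσ =>
      pow_le_pow_right₀ (by simp) (hF.card_owner_fiber_le hFt hσ)
  simp only [Fintype.card_prod, Fintype.card_bool, Fintype.card_fin, card_powersetCard,
    Nat.cast_pow, Nat.cast_ofNat] at hE
  exact (Nat.cast_le.mpr (card_le_card hsub)).trans hE

end IsPartDisjoint

theorem exists_adjacentFamiliesBelow {m : ℕ}
    (hm : (((2 * k) ^ 2 : ℕ) : ℝ) ^ m * (1 - 1 / 4 ^ 16) ^ m.choose 2 < 1) :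
    ∃ f : Fin k × Fin k → Bool × Bool, AdjacentFamiliesBelow f m := by
  by_contra! hbad
  set 𝓕 := {F ∈ smallSets.powersetCard m | IsPartDisjoint F}
  have hcover : (univ : Finset (Fin k × Fin k → Bool × Bool)) ⊆
      𝓕.biUnion fun F => {f | IsPairwiseAdjacent f F} := by
    intro f _
    simp only [AdjacentFamiliesBelow, not_forall, not_lt] at hbad
    obtain ⟨F, hFt, hF, hadj, hmF⟩ := hbad f
    obtain ⟨F', hF'F, hF'm⟩ := exists_subset_card_eq hmF
    exact mem_biUnion.mpr ⟨F', mem_filter.mpr ⟨mem_powersetCard.mpr ⟨hF'F.trans hFt, hF'm⟩,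
      hF.mono hF'F⟩, mem_filter.mpr ⟨mem_univ _, hadj.mono (coe_subset.mpr hF'F)⟩⟩
  have h𝓕 : #𝓕 ≤ ((2 * k) ^ 2) ^ m := calc
    #𝓕 ≤ (#smallSets).choose m := (card_filter_le _ _).trans (card_powersetCard _ _).le
    _ ≤ ((2 * k) ^ 2) ^ m := (Nat.choose_le_pow _ _).trans (Nat.pow_le_pow_left card_smallSets_le m)
  set q : ℝ := (1 - 1 / 4 ^ 16) ^ m.choose 2
  have : (4 : ℝ) ^ (k * k) ≤ 4 ^ (k * k) * ((((2 * k) ^ 2 : ℕ) : ℝ) ^ m * q) := calc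
    (4 : ℝ) ^ (k * k) = #(univ : Finset (Fin k × Fin k → Bool × Bool)) := by simp
    _ ≤ #(𝓕.biUnion fun F => {f | IsPairwiseAdjacent f F}) := by
        exact_mod_cast card_le_card hcover
    _ ≤ ∑ F ∈ 𝓕, (#{f | IsPairwiseAdjacent f F} : ℝ) := by exact_mod_cast card_biUnion_le
    _ ≤ ∑ F ∈ 𝓕, 4 ^ (k * k) * q := sum_le_sum fun F hF𝓕 => by
        obtain ⟨hFm, hF⟩ := mem_filter.mp hF𝓕
        obtain ⟨hFt, rfl⟩ := mem_powersetCard.mp hFm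
        exact hF.card_isPairwiseAdjacent_le hFt
    _ = #𝓕 * (4 ^ (k * k) * q) := by rw [sum_const, nsmul_eq_mul]
    _ ≤ (((2 * k) ^ 2 : ℕ) : ℝ) ^ m * (4 ^ (k * k) * q) := by
        gcongr
        exact_mod_cast h𝓕
    _ = _ := by ring
  have h4 : (0 : ℝ) < 4 ^ (k * k) := by positivity
  nlinarith

def partConflict : SimpleGraph (Finset (Fin k × Bool)) :=
  SimpleGraph.fromRel fun s t => ¬Disjoint (s.image Prod.fst) (t.image Prod.fst)

/-- Each such `b` contains the other vertex `(u.1, !u.2)` of the part of some `u ∈ a`. -/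
theorem card_partConflict_le {S : Finset (Finset (Fin k × Bool))}
    (hS : (S : Set (Finset (Fin k × Bool))).PairwiseDisjoint id) {a : Finset (Fin k × Bool)}
    (ha : a ∈ S) : #{b ∈ S | partConflict.Adj a b} ≤ #a := by
  refine (card_le_card_of_forall_subsingleton (fun b w => w ∈ b) (t := a.image fun u => (u.1, !u.2))
    ?_ ?_).trans card_image_le
  · intro b hb
    obtain ⟨hbS, hb⟩ := mem_filter.mp hb
    obtain ⟨hab, hconf⟩ := (SimpleGraph.fromRel_adj _ _ _).mp hb
    obtain ⟨p, hpa, hpb⟩ : ∃ p, p ∈ a.image Prod.fst ∧ p ∈ b.image Prod.fst := by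
      rcases hconf with h | h
      · exact not_disjoint_iff.mp h
      · obtain ⟨p, h1, h2⟩ := not_disjoint_iff.mp h
        exact ⟨p, h2, h1⟩
    obtain ⟨u, hu, rfl⟩ := mem_image.mp hpa
    obtain ⟨v, hv, hvu⟩ := mem_image.mp hpb
    have hne : v ≠ u := fun h => disjoint_left.mp (hS ha hbS hab) hu (h ▸ hv)
    refine ⟨v, mem_image.mpr ⟨u, hu, Prod.ext hvu.symm ?_⟩, hv⟩
    exact (Bool.eq_not.mpr fun h => hne (Prod.ext hvu h)).symm
  · intro w _ b₁ hb₁ b₂ hb₂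
    by_contra hne
    exact disjoint_left.mp (hS (mem_filter.mp hb₁.1).1 (mem_filter.mp hb₂.1).1 hne) hb₁.2 hb₂.2

theorem exists_isPartDisjoint_subset {S : Finset (Finset (Fin k × Bool))}
    (hS : (S : Set (Finset (Fin k × Bool))).PairwiseDisjoint id) (h2 : ∀ s ∈ S, #s ≤ 2)
    (hinj : ∀ s ∈ S, Set.InjOn Prod.fst (s : Set (Fin k × Bool))) :
    ∃ I ⊆ S, IsPartDisjoint I ∧ #S ≤ 3 * #I := by
  obtain ⟨I, hIS, hI, hcard⟩ := partConflict.exists_isIndepSet_subset_of_degree_le S (d := 2)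
    fun a ha => (card_partConflict_le hS ha).trans (h2 a ha)
  refine ⟨I, hIS, ⟨fun s hs t ht hst => ?_, fun s hs => hinj s (hIS hs)⟩, hcard⟩
  by_contra h
  exact hI hs ht hst ((SimpleGraph.fromRel_adj _ _ _).mpr ⟨hst, Or.inl h⟩)

theorem injOn_fst_of_connected_induce {f : Fin k × Fin k → Bool × Bool}
    {s : Finset (Fin k × Bool)} (hs : ((removalGraph f).induce (s : Set (Fin k × Bool))).Connected)
    (h2 : #s ≤ 2) : Set.InjOn Prod.fst (s : Set (Fin k × Bool)) := by
  intro u hu v hv huv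
  by_contra hne
  have hsuv : s = {u, v} := (eq_of_subset_of_card_le (insert_subset hu
    (singleton_subset_iff.mpr hv)) (by rw [card_pair hne]; exact h2)).symm
  have hadj := SimpleGraph.adj_of_connected_induce_subset_pair hs hu hv hne
    (by rw [hsuv, coe_pair])
  exact ((removalGraph_adj f).mp hadj).1 huv

theorem exists_smallBags_of_hasKMinor {f : Fin k × Fin k → Bool × Bool} {t : ℕ}
    (h : HasKMinor (removalGraph f) t) :
    ∃ S ⊆ smallSets, (S : Set (Finset (Fin k × Bool))).PairwiseDisjoint id ∧
      (∀ s ∈ S, Set.InjOn Prod.fst (s : Set (Fin k × Bool))) ∧ IsPairwiseAdjacent f S ∧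
      3 * t ≤ 2 * k + 2 * #S := by
  obtain ⟨B, hne, hdisj, hconn, hadj⟩ := h
  set B' : Fin t → Finset (Fin k × Bool) := fun i => (B i).toFinset
  have hne' : ∀ i, (B' i).Nonempty := fun i => Set.toFinset_nonempty.mpr (hne i)
  have hdisj' : Pairwise (Function.onFun Disjoint B') :=
    fun i j hij => Set.disjoint_toFinset.mpr (hdisj hij)
  have hinj : B'.Injective := fun i j hij => by
    by_contra h
    obtain ⟨u, hu⟩ := hne' i
    exact disjoint_left.mp (hdisj' h) hu (hij ▸ hu)
  have hbags := three_mul_card_le_card_add_two_mul_card_filter B' hne' hdisj'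
  simp only [Fintype.card_fin, Fintype.card_prod, Fintype.card_bool] at hbags
  refine ⟨({i | #(B' i) ≤ 2} : Finset (Fin t)).image B', ?_, ?_, ?_, ?_, ?_⟩
  · simp only [image_subset_iff, mem_filter, mem_univ, true_and]
    exact fun i hi => mem_smallSets (hne' i) hi
  · rintro _ hs _ hs' hss'
    obtain ⟨i, -, rfl⟩ := mem_image.mp hs
    obtain ⟨j, -, rfl⟩ := mem_image.mp hs'
    exact hdisj' fun h => hss' (h ▸ rfl)
  · simp only [mem_image, mem_filter, mem_univ, true_and, forall_exists_index, and_imp]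
    rintro _ i hi rfl
    exact injOn_fst_of_connected_induce (by rw [Set.coe_toFinset]; exact hconn i) hi
  · rintro _ hs _ hs' hss'
    obtain ⟨i, -, rfl⟩ := mem_image.mp hs
    obtain ⟨j, -, rfl⟩ := mem_image.mp hs'
    obtain ⟨u, hu, v, hv, huv⟩ := hadj i j fun h => hss' (h ▸ rfl)
    exact ⟨u, Set.mem_toFinset.mpr hu, v, Set.mem_toFinset.mpr hv, huv⟩
  · rw [card_image_of_injective _ hinj]
    omega

theorem not_hasKMinor {f : Fin k × Fin k → Bool × Bool} {m t : ℕ}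
    (hf : AdjacentFamiliesBelow f m) (hmt : 2 * k + 6 * m < 3 * t + 6) :
    ¬HasKMinor (removalGraph f) t := by
  intro h
  obtain ⟨S, hS, hdisj, hinj, hadj, hcard⟩ := exists_smallBags_of_hasKMinor h
  obtain ⟨I, hIS, hI, hSI⟩ := exists_isPartDisjoint_subset hdisj
    (fun s hs => card_le_two_of_mem_smallSets (hS hs)) hinj
  have := hf I (hIS.trans hS) hI (hadj.mono (coe_subset.mpr hIS))
  omega

end FrozenMinor

open FrozenMinor in
/-- For every `ε > 0` there exists `t₀` such that for every `t ≥ t₀` there is a finite simple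
graph `G` that admits no `K_t`-minor but admits a frozen proper `⌈(3/2-ε)t⌉`-colouring. -/
theorem statement2 (ε : ℝ) (hε : 0 < ε) :
    ∃ t₀ : ℕ, ∀ t : ℕ, t₀ ≤ t →
      ∃ (V : Type) (_ : Fintype V) (G : SimpleGraph V),
        ¬ HasKMinor G t ∧
        ∃ α : V → Fin ⌈(3 / 2 - ε) * (t : ℝ)⌉₊,
          IsProperColoring G α ∧ IsFrozen G α := by
  obtain ⟨t₀, ht₀⟩ := Filter.eventually_atTop.mp
    (eventually_exists_parameters hε (C := 2 * 4 ^ 16) (by positivity))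
  refine ⟨t₀, fun t ht => ?_⟩
  obtain ⟨m, hlog, hmt⟩ := ht₀ t ht
  have hcount := pow_mul_one_sub_inv_pow_choose_two_lt_one (N := 4 ^ 16) (by positivity)
    (by exact_mod_cast hlog)
  obtain ⟨f, hf⟩ := exists_adjacentFamiliesBelow (by exact_mod_cast hcount)
  exact ⟨_, inferInstance, removalGraph f, not_hasKMinor hf hmt, Prod.fst,
    isProperColoring_fst f, isFrozen_fst f⟩
end

section
/- For every graph G in the class 𝒢_n, the n-colouring assigning colour i to both a_i and b_i (for 1 ≤ i ≤ n) is a proper frozen n-colouring of G. -/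
/-!
For `i ≠ j` the single pair missing between `{a_i, b_i}` and `{a_j, b_j}` leaves on each side a
vertex adjacent to both vertices of the other side. Two such vertices, one per side, are adjacent
to each other and every other vertex of the two classes is adjacent to one of them, so the union
of the two classes induces a connected graph.
-/

/-- The vertex set `{a_1, …, a_n, b_1, …, b_n}`: `(i, false)` is `a_i` and `(i, true)` is
`b_i`. -/
abbrev Vtx (n : ℕ) := Fin n × Bool

/-- `G` belongs to the class `𝒢_n`: for each pair `i < j` there is exactly one excluded pair
among `a_i a_j, a_i b_j, b_i a_j, b_i b_j` (recorded by `excl` as a pair of booleans), the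
other three pairs are edges, and there are no other edges. -/
def InGClass (n : ℕ) (G : SimpleGraph (Vtx n)) : Prop :=
  ∃ excl : {p : Fin n × Fin n // p.1 < p.2} → Bool × Bool,
    ∀ u v : Vtx n, G.Adj u v ↔
      (∃ h : u.1 < v.1, (u.2, v.2) ≠ excl ⟨(u.1, v.1), h⟩) ∨
      (∃ h : v.1 < u.1, (v.2, u.2) ≠ excl ⟨(v.1, u.1), h⟩)

theorem SimpleGraph.connected_induce_union_of_forall_adj {V : Type*} {G : SimpleGraph V}
    {s t : Set V} {a b : V} (ha : a ∈ s) (hb : b ∈ t)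
    (hat : ∀ v ∈ t, G.Adj a v) (hbs : ∀ u ∈ s, G.Adj b u) :
    (G.induce (s ∪ t)).Connected := by
  rw [connected_iff_exists_forall_reachable]
  refine ⟨⟨a, .inl ha⟩, ?_⟩
  rintro ⟨v, hv | hv⟩
  · have hab : (G.induce (s ∪ t)).Adj ⟨a, .inl ha⟩ ⟨b, .inr hb⟩ := hat b hb
    have hbv : (G.induce (s ∪ t)).Adj ⟨b, .inr hb⟩ ⟨v, .inl hv⟩ := hbs v hv
    exact hab.reachable.trans hbv.reachable
  · exact Adj.reachable (G := G.induce (s ∪ t)) (hat v hv)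

namespace InGClass

variable {n : ℕ} {G : SimpleGraph (Vtx n)}

theorem fst_ne_of_adj (hG : InGClass n G) {u v : Vtx n} (huv : G.Adj u v) : u.1 ≠ v.1 := by
  obtain ⟨excl, hE⟩ := hG
  rcases (hE u v).1 huv with ⟨h, -⟩ | ⟨h, -⟩
  exacts [h.ne, h.ne']

theorem exists_forall_adj (hG : InGClass n G) {i j : Fin n} (hij : i ≠ j) :
    ∃ x : Bool, ∀ y : Bool, G.Adj (i, x) (j, y) := by
  obtain ⟨excl, hE⟩ := hG
  rcases hij.lt_or_gt with h | h
  · refine ⟨!(excl ⟨(i, j), h⟩).1, fun y => (hE _ _).2 (.inl ⟨h, fun he => ?_⟩)⟩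
    exact Bool.not_ne_self _ (congrArg Prod.fst he)
  · refine ⟨!(excl ⟨(j, i), h⟩).2, fun y => (hE _ _).2 (.inr ⟨h, fun he => ?_⟩)⟩
    exact Bool.not_ne_self _ (congrArg Prod.snd he)

end InGClass

/-- For every graph `G` in the class `𝒢_n`, the `n`-colouring assigning colour `i` to both
`a_i` and `b_i` is a proper frozen `n`-colouring of `G`. -/
theorem statement7 (n : ℕ) (G : SimpleGraph (Vtx n)) (hG : InGClass n G) :
    IsProperColoring G (fun v : Vtx n => v.1) ∧ IsFrozen G (fun v : Vtx n => v.1) := by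
  refine ⟨fun _ _ => hG.fst_ne_of_adj, fun c => ⟨(c, false), rfl⟩, fun c₁ c₂ hne => ?_⟩
  obtain ⟨x, hx⟩ := hG.exists_forall_adj hne
  obtain ⟨y, hy⟩ := hG.exists_forall_adj hne.symm
  exact SimpleGraph.connected_induce_union_of_forall_adj (s := {v : Vtx n | v.1 = c₁})
    (t := {v : Vtx n | v.1 = c₂}) (a := (c₁, x)) (b := (c₂, y)) rfl rfl
    (by rintro ⟨_, z⟩ rfl; exact hx z) (by rintro ⟨_, z⟩ rfl; exact hy z)
end

section
/- Let G be a graph in the class 𝒢_n and suppose there exist four distinct indices i, j, k, ℓ such that none of the pairs a_i b_j, a_j b_k, a_k b_ℓ, a_ℓ b_i is an edge of G. Then the map α defined by α(a_p) = α(b_p) = p for all p ∉ {i,j,k,ℓ}, α(a_i) = α(b_j) = i, α(a_j) = α(b_k) = j, α(a_k) = α(b_ℓ) = k, α(a_ℓ) = α(b_i) = ℓ, is a proper n-colouring of G whose partition into colour classes differs from the partition {{a_p, b_p} : 1 ≤ p ≤ n}. -/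
/-- The recolouring of the paper: `α(a_p) = α(b_p) = p` for `p ∉ {i, j, k, ℓ}`, and
`α(a_i) = α(b_j) = i`, `α(a_j) = α(b_k) = j`, `α(a_k) = α(b_ℓ) = k`, `α(a_ℓ) = α(b_i) = ℓ`. -/
def recolouring {n : ℕ} (i j k l : Fin n) : Vtx n → Fin n := fun v =>
  if v.2 = false then v.1
  else if v.1 = j then i
  else if v.1 = k then j
  else if v.1 = l then k
  else if v.1 = i then l
  else v.1

theorem InGClass.fst_ne_of_adj_s8 {n : ℕ} {G : SimpleGraph (Vtx n)} (hG : InGClass n G)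
    {u v : Vtx n} (huv : G.Adj u v) : u.1 ≠ v.1 := by
  obtain ⟨excl, hexcl⟩ := hG
  rcases (hexcl u v).1 huv with ⟨hlt, -⟩ | ⟨hlt, -⟩
  · exact hlt.ne
  · exact hlt.ne'

section Recolouring

variable {n : ℕ} (i j k l : Fin n)

@[simp]
theorem recolouring_false (p : Fin n) : recolouring i j k l (p, false) = p := rfl

theorem recolouring_true_of_ne {p q : Fin n} (hq : recolouring i j k l (q, true) = p)
    (hpq : p ≠ q) :
    (p, q) = (i, j) ∨ (p, q) = (j, k) ∨ (p, q) = (k, l) ∨ (p, q) = (l, i) := by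
  simp only [recolouring] at hq
  split_ifs at hq <;> subst_vars <;> simp_all

variable {i j k l}

theorem recolouring_true_injective (hij : i ≠ j) (hik : i ≠ k) (hil : i ≠ l) (hjk : j ≠ k)
    (hjl : j ≠ l) (hkl : k ≠ l) :
    Function.Injective fun p => recolouring i j k l (p, true) := by
  intro p q hpq
  simp only [recolouring] at hpq
  split_ifs at hpq <;> subst_vars <;> simp_all

theorem isProperColoring_recolouring {G : SimpleGraph (Vtx n)}
    (hG : ∀ u v, G.Adj u v → u.1 ≠ v.1)
    (hij : i ≠ j) (hik : i ≠ k) (hil : i ≠ l) (hjk : j ≠ k) (hjl : j ≠ l) (hkl : k ≠ l)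
    (h1 : ¬ G.Adj (i, false) (j, true)) (h2 : ¬ G.Adj (j, false) (k, true))
    (h3 : ¬ G.Adj (k, false) (l, true)) (h4 : ¬ G.Adj (l, false) (i, true)) :
    IsProperColoring G (recolouring i j k l) := by
  have mixed : ∀ p q, G.Adj (p, false) (q, true) →
      recolouring i j k l (p, false) ≠ recolouring i j k l (q, true) := by
    intro p q hadj hpq
    rw [recolouring_false] at hpq
    rcases recolouring_true_of_ne i j k l hpq.symm (hG _ _ hadj) with h | h | h | h <;>
      simp only [Prod.mk.injEq] at h <;> obtain ⟨rfl, rfl⟩ := h <;> contradiction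
  rintro ⟨p, _ | _⟩ ⟨q, _ | _⟩ hadj hpq
  · exact hG _ _ hadj hpq
  · exact mixed p q hadj hpq
  · exact mixed q p hadj.symm hpq.symm
  · exact hG _ _ hadj (recolouring_true_injective hij hik hil hjk hjl hkl hpq)

/-- The colour class of `i` contains both `a_i` and `b_j`. -/
theorem colourClasses_recolouring_ne (hij : i ≠ j) :
    {C : Set (Vtx n) | ∃ c : Fin n, C = {v | recolouring i j k l v = c}} ≠
      {C : Set (Vtx n) | ∃ p : Fin n, C = {(p, false), (p, true)}} := by
  intro hclasses
  obtain ⟨p, hp⟩ : {v | recolouring i j k l v = i} ∈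
      {C : Set (Vtx n) | ∃ p : Fin n, C = {(p, false), (p, true)}} :=
    hclasses ▸ ⟨i, rfl⟩
  have ha : ((i, false) : Vtx n) ∈ {v | recolouring i j k l v = i} := rfl
  have hb : ((j, true) : Vtx n) ∈ {v | recolouring i j k l v = i} := by
    simp [recolouring]
  rw [hp] at ha hb
  simp only [Set.mem_insert_iff, Set.mem_singleton_iff, Prod.mk.injEq, Bool.false_eq_true,
    Bool.true_eq_false, and_false, and_true, or_false, false_or] at ha hb
  exact hij (ha.trans hb.symm)

end Recolouring

/-- If `G ∈ 𝒢_n` and `i, j, k, ℓ` are four distinct indices such that none of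
`a_i b_j, a_j b_k, a_k b_ℓ, a_ℓ b_i` is an edge of `G`, then the recolouring above is a
proper `n`-colouring of `G` whose partition into colour classes differs from the partition
`{{a_p, b_p} : 1 ≤ p ≤ n}`. -/
theorem statement8 (n : ℕ) (G : SimpleGraph (Vtx n)) (hG : InGClass n G)
    (i j k l : Fin n)
    (hij : i ≠ j) (hik : i ≠ k) (hil : i ≠ l) (hjk : j ≠ k) (hjl : j ≠ l) (hkl : k ≠ l)
    (h1 : ¬ G.Adj (i, false) (j, true)) (h2 : ¬ G.Adj (j, false) (k, true))
    (h3 : ¬ G.Adj (k, false) (l, true)) (h4 : ¬ G.Adj (l, false) (i, true)) :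
    IsProperColoring G (recolouring i j k l) ∧
    {C : Set (Vtx n) | ∃ c : Fin n, C = {v | recolouring i j k l v = c}} ≠
      {C : Set (Vtx n) | ∃ p : Fin n, C = {(p, false), (p, true)}} :=
  ⟨isProperColoring_recolouring (fun _ _ => hG.fst_ne_of_adj_s8) hij hik hil hjk hjl hkl
    h1 h2 h3 h4, colourClasses_recolouring_ne hij⟩
end

section
/- In the random graph G_n, for every k, the probability that some set of k vertices induces a clique is at most (2n choose k) · (3/4)^(k choose 2). -/
open MeasureTheory
open scoped ENNReal

/-- The index set of unordered pairs `i < j`. -/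
abbrev PairIdx (n : ℕ) := {p : Fin n × Fin n // p.1 < p.2}

/-- The sample space: for each pair `i < j`, one of the four possible pairs (encoded by an
element of `Fin 4` via `code`) is chosen to be the non-edge. -/
abbrev Omega (n : ℕ) := PairIdx n → Fin 4

/-- Encoding of the four pairs `(a_i,a_j), (a_i,b_j), (b_i,a_j), (b_i,b_j)` as `Fin 4`. -/
def code : Bool × Bool → Fin 4
  | (false, false) => 0
  | (false, true) => 1
  | (true, false) => 2
  | (true, true) => 3

instance (n : ℕ) : MeasurableSpace (Omega n) := ⊤

/-- The random graph `G_n` determined by the sample point `ω`: for `i < j`, the vertices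
`(i, x)` and `(j, y)` are adjacent iff `(x, y)` is not the uniformly chosen excluded pair
`ω ⟨(i, j), _⟩`; `a_i` and `b_i` are never adjacent. -/
def Gn (n : ℕ) (ω : Omega n) : SimpleGraph (Vtx n) where
  Adj u v :=
    (∃ h : u.1 < v.1, ω ⟨(u.1, v.1), h⟩ ≠ code (u.2, v.2)) ∨
    (∃ h : v.1 < u.1, ω ⟨(v.1, u.1), h⟩ ≠ code (v.2, u.2))
  symm := by
    constructor
    rintro u v (⟨h1, h2⟩ | ⟨h1, h2⟩)
    · exact Or.inr ⟨h1, h2⟩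
    · exact Or.inl ⟨h1, h2⟩
  loopless := by
    constructor
    rintro u (⟨h1, _⟩ | ⟨h1, _⟩) <;> exact absurd h1 (lt_irrefl _)

/-- The uniform probability measure on the sample space: the excluded pairs are chosen
independently and uniformly at random. -/
noncomputable def Pn (n : ℕ) : Measure (Omega n) :=
  (PMF.uniformOfFintype (Omega n)).toMeasure

/-!
A clique contains at most one of `a_i, b_i` (these are never adjacent), so a `k`-clique `S` has
`k` distinct indices, and for each of the `k.choose 2` index pairs `i < j` the independent uniform
choice at `(i, j)` must avoid the one pair that would delete an edge of `S`: this has probability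
`(3/4)^(k.choose 2)`. A union bound over the `(2n).choose k` vertex sets of size `k` concludes.
-/

open Finset

section UniformForallNe

variable {ι α : Type*} [Fintype ι] [DecidableEq ι] [Fintype α] [DecidableEq α] [Nonempty α]
  [MeasurableSpace (ι → α)] [MeasurableSingletonClass (ι → α)]

theorem toMeasure_uniformOfFintype_forall_ne (P : Finset ι) (c : ι → α) :
    (PMF.uniformOfFintype (ι → α)).toMeasure {ω | ∀ i ∈ P, ω i ≠ c i} =
      ((Fintype.card α - 1 : ℕ) / Fintype.card α : ℝ≥0∞) ^ #P := by
  set s : ι → Finset α := fun i => if i ∈ P then univ.erase (c i) else univ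
  have hset : {ω | ∀ i ∈ P, ω i ≠ c i} = (Fintype.piFinset s : Set (ι → α)) := by
    ext ω
    simp only [Set.mem_ofPred_eq, mem_coe, Fintype.mem_piFinset, s]
    refine forall_congr' fun i => ?_
    split_ifs with hi <;> simp [hi]
  have hcard_ne_zero : (Fintype.card α : ℝ≥0∞) ≠ 0 := by simp
  have hratio (i : ι) : (#(s i) : ℝ≥0∞) / Fintype.card α =
      if i ∈ P then ((Fintype.card α - 1 : ℕ) : ℝ≥0∞) / Fintype.card α else 1 := by
    split_ifs with hi
    · simp [s, hi, card_erase_of_mem]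
    · simp [s, hi, ENNReal.div_self hcard_ne_zero (ENNReal.natCast_ne_top _)]
  rw [hset, PMF.toMeasure_uniformOfFintype_apply _ (Set.toFinite _).measurableSet,
    ← Nat.card_eq_fintype_card, Nat.card_coe_set_eq, Set.ncard_coe_finset,
    Fintype.card_piFinset, Fintype.card_fun, Nat.cast_prod, Nat.cast_pow,
    ← Finset.card_univ (α := ι), ← prod_const,
    ← ENNReal.prod_div_distrib_of_ne_top fun _ _ => ENNReal.natCast_ne_top _]
  simp_rw [hratio]
  rw [prod_ite_mem, univ_inter, prod_const]

end UniformForallNe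

section Clique

variable {n : ℕ}

namespace Gn

variable {ω : Omega n}

theorem adj_of_fst_lt {u v : Vtx n} (h : u.1 < v.1) :
    (Gn n ω).Adj u v ↔ ω ⟨(u.1, v.1), h⟩ ≠ code (u.2, v.2) := by
  simp [Gn, h, not_lt_of_gt h]

theorem fst_ne_of_adj {u v : Vtx n} (h : (Gn n ω).Adj u v) : u.1 ≠ v.1 := by
  rintro huv
  rcases h with ⟨h, -⟩ | ⟨h, -⟩ <;> simp [huv] at h

theorem injOn_fst_of_isClique {S : Set (Vtx n)} (hS : (Gn n ω).IsClique S) :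
    S.InjOn Prod.fst :=
  fun _ hu _ hv huv => not_not.1 fun hne => fst_ne_of_adj (hS hu hv hne) huv

end Gn

def indexPairs (S : Finset (Vtx n)) : Finset (PairIdx n) :=
  (S.image Prod.fst ×ˢ S.image Prod.fst).subtype fun p => p.1 < p.2

theorem card_indexPairs {S : Finset (Vtx n)} (hS : Set.InjOn Prod.fst (S : Set (Vtx n))) :
    #(indexPairs S) = (#S).choose 2 := by
  rw [indexPairs, card_subtype, card_product_filter_lt, card_image_of_injOn hS]

/-- When `S` contains at most one of `a_i, b_i` for each `i`, this is the code of the pair of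
vertices of `S` with indices `p`, i.e. the excluded pair that would break the clique `S`. -/
def cliqueCode (S : Finset (Vtx n)) (p : PairIdx n) : Fin 4 :=
  code (decide ((p.1.1, true) ∈ S), decide ((p.1.2, true) ∈ S))

theorem decide_mem_eq_snd {S : Finset (Vtx n)} (hS : Set.InjOn Prod.fst (S : Set (Vtx n)))
    {u : Vtx n} (hu : u ∈ S) : decide ((u.1, true) ∈ S) = u.2 := by
  obtain ⟨i, _ | _⟩ := u
  · have : (i, true) ∉ S := fun h => by simpa using hS hu h rfl
    simpa using this
  · simpa using hu

theorem ne_cliqueCode_of_isClique {ω : Omega n} {S : Finset (Vtx n)}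
    (hS : (Gn n ω).IsClique (S : Set (Vtx n))) : ∀ p ∈ indexPairs S, ω p ≠ cliqueCode S p := by
  rintro ⟨⟨i, j⟩, hij⟩ hp
  simp only [indexPairs, mem_subtype, mem_product, mem_image] at hp
  obtain ⟨⟨u, hu, rfl⟩, ⟨v, hv, rfl⟩⟩ := hp
  have hinj := Gn.injOn_fst_of_isClique hS
  rw [cliqueCode, decide_mem_eq_snd hinj hu, decide_mem_eq_snd hinj hv]
  exact (Gn.adj_of_fst_lt hij).1 (hS hu hv fun huv => hij.ne (congrArg Prod.fst huv))

theorem Pn_isClique_le (S : Finset (Vtx n)) :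
    Pn n {ω | (Gn n ω).IsClique (S : Set (Vtx n))} ≤ (3 / 4 : ℝ≥0∞) ^ (#S).choose 2 := by
  by_cases hS : Set.InjOn Prod.fst (S : Set (Vtx n))
  · calc Pn n {ω | (Gn n ω).IsClique (S : Set (Vtx n))}
        ≤ Pn n {ω | ∀ p ∈ indexPairs S, ω p ≠ cliqueCode S p} :=
          measure_mono fun _ => ne_cliqueCode_of_isClique
      _ = (3 / 4 : ℝ≥0∞) ^ (#S).choose 2 := by
          rw [Pn, toMeasure_uniformOfFintype_forall_ne, card_indexPairs hS]
          norm_num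
  · have hempty : {ω | (Gn n ω).IsClique (S : Set (Vtx n))} = ∅ :=
      Set.eq_empty_of_forall_notMem fun _ hclique => hS (Gn.injOn_fst_of_isClique hclique)
    simp [hempty]

end Clique

/-- In the random graph `G_n`, for every `k`, the probability that some set of `k` vertices
induces a clique is at most `(2n choose k) * (3/4)^(k choose 2)`. -/
theorem statement13 (n k : ℕ) :
    Pn n {ω | ∃ S : Finset (Vtx n), S.card = k ∧ (Gn n ω).IsClique (S : Set (Vtx n))} ≤
      ((2 * n).choose k : ℝ≥0∞) * (3 / 4 : ℝ≥0∞) ^ k.choose 2 := by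
  have hunion : {ω | ∃ S : Finset (Vtx n), S.card = k ∧ (Gn n ω).IsClique (S : Set (Vtx n))} =
      ⋃ S ∈ powersetCard k (univ : Finset (Vtx n)), {ω | (Gn n ω).IsClique (S : Set (Vtx n))} := by
    ext ω
    simp
  rw [hunion]
  calc _ ≤ ∑ S ∈ powersetCard k (univ : Finset (Vtx n)), _ := measure_biUnion_finset_le _ _
    _ ≤ ∑ S ∈ powersetCard k (univ : Finset (Vtx n)), (3 / 4 : ℝ≥0∞) ^ k.choose 2 :=
        sum_le_sum fun S hS => (mem_powersetCard.1 hS).2 ▸ Pn_isClique_le S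
    _ = ((2 * n).choose k : ℝ≥0∞) * (3 / 4 : ℝ≥0∞) ^ k.choose 2 := by
        simp [card_powersetCard, mul_comm]
end

section
/- Let S be a family of k pairwise disjoint two-element subsets of {a_1,…,a_n, b_1,…,b_n} such that no member of S equals {a_i, b_i} for any i. Then there is a subfamily S' ⊆ S with |S'| ≥ k/3 such that the union of the members of S' contains at most one vertex from each pair {a_i, b_i}. -/
open Finset

section PartnerFree

variable {α : Type*} [DecidableEq α]

def PartnerFree (σ : α → α) (s : Finset α) : Prop :=
  ∀ v ∈ s, σ v ∉ s

theorem Finset.card_filter_not_disjoint_le {S : Finset (Finset α)}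
    (hS : (S : Set (Finset α)).PairwiseDisjoint id) (T : Finset α) :
    #(S.filter fun Q => ¬Disjoint T Q) ≤ #T := by
  have hsub : S.filter (fun Q => ¬Disjoint T Q) ⊆ T.biUnion fun t => S.filter (t ∈ ·) := by
    intro Q hQ
    obtain ⟨hQS, hTQ⟩ := mem_filter.1 hQ
    obtain ⟨t, htT, htQ⟩ := not_disjoint_iff.1 hTQ
    exact mem_biUnion.2 ⟨t, htT, mem_filter.2 ⟨hQS, htQ⟩⟩
  calc #(S.filter fun Q => ¬Disjoint T Q)
      ≤ #(T.biUnion fun t => S.filter (t ∈ ·)) := card_le_card hsub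
    _ ≤ ∑ t ∈ T, #(S.filter (t ∈ ·)) := card_biUnion_le
    _ ≤ ∑ _t ∈ T, 1 := by
        refine sum_le_sum fun t _ => card_le_one.2 fun Q hQ R hR => ?_
        rw [mem_filter] at hQ hR
        by_contra hQR
        exact disjoint_left.1 (hS hQ.1 hR.1 hQR) hQ.2 hR.2
    _ = #T := by rw [sum_const, smul_eq_mul, mul_one]

theorem PartnerFree.union {σ : α → α} (hσ : Function.Involutive σ) {s t : Finset α}
    (hs : PartnerFree σ s) (ht : PartnerFree σ t) (hst : Disjoint (s.image σ) t) :
    PartnerFree σ (s ∪ t) := by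
  intro v hv hσv
  rcases mem_union.1 hv with hvs | hvt <;> rcases mem_union.1 hσv with hσvs | hσvt
  · exact hs v hvs hσvs
  · exact disjoint_left.1 hst (mem_image_of_mem σ hvs) hσvt
  · exact disjoint_left.1 hst (mem_image.2 ⟨σ v, hσvs, hσ v⟩) hvt
  · exact ht v hvt hσvt

theorem exists_partnerFree_subfamily {σ : α → α} (hσ : Function.Involutive σ) (m : ℕ)
    (S : Finset (Finset α)) (hcard : ∀ P ∈ S, #P ≤ m)
    (hdisj : (S : Set (Finset α)).PairwiseDisjoint id) (hfree : ∀ P ∈ S, PartnerFree σ P) :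
    ∃ S' ⊆ S, #S ≤ (m + 1) * #S' ∧ PartnerFree σ (S'.biUnion id) := by
  induction S using Finset.strongInduction with
  | H S ih =>
  rcases S.eq_empty_or_nonempty with rfl | ⟨P, hP⟩
  · exact ⟨∅, empty_subset _, by simp, by simp [PartnerFree]⟩
  set S₀ := (S.erase P).filter fun Q => Disjoint (P.image σ) Q
  have hS₀S : S₀ ⊆ S := (filter_subset _ _).trans (erase_subset _ _)
  have hS₀ : #S ≤ #S₀ + m + 1 :=
    calc #S = #S₀ + #((S.erase P).filter fun Q => ¬Disjoint (P.image σ) Q) + 1 := by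
          rw [card_filter_add_card_filter_not, card_erase_add_one hP]
      _ ≤ #S₀ + #(P.image σ) + 1 := by
          gcongr
          exact card_filter_not_disjoint_le (hdisj.subset (coe_subset.2 (erase_subset P S))) _
      _ ≤ #S₀ + m + 1 := by grw [card_image_le, hcard P hP]
  obtain ⟨S'', hS''S₀, hS'', hfree''⟩ :=
    ih S₀ ((filter_subset _ _).trans_ssubset (erase_ssubset hP))
      (fun Q hQ => hcard Q (hS₀S hQ)) (hdisj.subset (coe_subset.2 hS₀S))
      (fun Q hQ => hfree Q (hS₀S hQ))
  have hPS'' : P ∉ S'' := fun h => notMem_erase P S (mem_filter.1 (hS''S₀ h)).1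
  refine ⟨insert P S'', insert_subset hP (hS''S₀.trans hS₀S), ?_, ?_⟩
  · rw [card_insert_of_notMem hPS'']
    nlinarith
  · rw [biUnion_insert]
    refine (hfree P hP).union hσ hfree'' ((disjoint_biUnion_right _ _ _).2 fun Q hQ => ?_)
    exact (mem_filter.1 (hS''S₀ hQ)).2

end PartnerFree

def Vtx.partner {n : ℕ} (v : Vtx n) : Vtx n := (v.1, !v.2)

theorem Vtx.partner_involutive (n : ℕ) : Function.Involutive (@Vtx.partner n) := by
  intro v
  simp [Vtx.partner]

theorem Vtx.partnerFree_iff {n : ℕ} (U : Finset (Vtx n)) :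
    PartnerFree Vtx.partner U ↔ ∀ i : Fin n, ¬((i, false) ∈ U ∧ (i, true) ∈ U) := by
  constructor
  · rintro hU i ⟨hf, ht⟩
    exact hU _ hf ht
  · rintro hU ⟨i, b⟩ hv hσv
    cases b
    · exact hU i ⟨hv, hσv⟩
    · exact hU i ⟨hσv, hv⟩

theorem Vtx.partnerFree_of_card_eq_two {n : ℕ} {P : Finset (Vtx n)} (hP : #P = 2)
    (hne : ∀ i : Fin n, P ≠ {(i, false), (i, true)}) : PartnerFree Vtx.partner P := by
  refine (Vtx.partnerFree_iff P).2 fun i ⟨hf, ht⟩ => hne i ?_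
  refine (eq_of_subset_of_card_le ?_ ?_).symm
  · exact insert_subset hf (singleton_subset_iff.2 ht)
  · rw [hP, card_pair (by simp)]

/-- Let `S` be a family of `k` pairwise disjoint two-element subsets of
`{a_1, …, a_n, b_1, …, b_n}` such that no member of `S` equals `{a_i, b_i}` for any `i`.
Then there is a subfamily `S' ⊆ S` with `|S'| ≥ k / 3` whose union contains at most one
vertex from each pair `{a_i, b_i}`. -/
theorem statement16 (n k : ℕ) (S : Finset (Finset (Vtx n)))
    (hk : S.card = k)
    (hsize : ∀ P ∈ S, P.card = 2)
    (hdisj : (S : Set (Finset (Vtx n))).Pairwise fun P Q => Disjoint P Q)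
    (hne : ∀ P ∈ S, ∀ i : Fin n, P ≠ {(i, false), (i, true)}) :
    ∃ S' : Finset (Finset (Vtx n)), S' ⊆ S ∧ (k : ℝ) / 3 ≤ (S'.card : ℝ) ∧
      ∀ i : Fin n, ¬ ((i, false) ∈ S'.biUnion id ∧ (i, true) ∈ S'.biUnion id) := by
  obtain ⟨S', hS'S, hcard, hfree⟩ :=
    exists_partnerFree_subfamily (Vtx.partner_involutive n) 2 S
      (fun P hP => (hsize P hP).le) hdisj
      (fun P hP => Vtx.partnerFree_of_card_eq_two (hsize P hP) (hne P hP))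
  refine ⟨S', hS'S, ?_, (Vtx.partnerFree_iff _).1 hfree⟩
  have : (k : ℝ) ≤ 3 * S'.card := by exact_mod_cast hk ▸ hcard
  linarith
end

section
/- The probability that the random graph G_n contains four distinct indices i, j, k, ℓ such that none of the pairs a_i b_j, a_j b_k, a_k b_ℓ, a_ℓ b_i is an edge tends to 1 as n tends to infinity. -/
open MeasureTheory
open scoped ENNReal

/-!
Split the indices into `⌊n/4⌋` disjoint blocks `{4m, 4m+1, 4m+2, 4m+3}`. A block yields the
required indices as soon as the four pairs `(4m, 4m+1), (4m+1, 4m+2), (4m+2, 4m+3), (4m, 4m+3)`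
have a prescribed excluded pair, which happens with probability `4⁻⁴ = 1/256`. The blocks involve
disjoint coordinates of the sample space, so all of them fail with probability at most
`(255/256)^⌊n/4⌋ → 0`.
-/

open Function Set

section BlockPatterns

variable {ι α κ τ : Type*} [Finite κ] [Finite τ]

theorem card_avoiding_pattern_le [Finite ι] [Finite α] (c : κ × τ → ι) (hc : Injective c)
    (v : τ → α) :
    Nat.card {f : ι → α // ∀ m, (fun t => f (c (m, t))) ≠ v} ≤
      (Nat.card α ^ Nat.card τ - 1) ^ Nat.card κ *
        Nat.card α ^ (Nat.card ι - Nat.card κ * Nat.card τ) := by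
  let restrict (f : {f : ι → α // ∀ m, (fun t => f (c (m, t))) ≠ v}) :
      (κ → ({v}ᶜ : Set (τ → α))) × (((range c)ᶜ : Set ι) → α) :=
    (fun m => ⟨fun t => f.1 (c (m, t)), f.2 m⟩, fun x => f.1 x)
  have h_inj : Injective restrict := by
    intro f g hfg
    simp only [restrict, Prod.mk.injEq, funext_iff, Subtype.ext_iff] at hfg
    refine Subtype.ext (funext fun x => ?_)
    by_cases hx : x ∈ range c
    · obtain ⟨⟨m, t⟩, rfl⟩ := hx
      exact hfg.1 m t
    · exact hfg.2 ⟨x, hx⟩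
  refine (Nat.card_le_card_of_injective restrict h_inj).trans_eq ?_
  rw [Nat.card_prod, Nat.card_fun, Nat.card_fun, Nat.card_coe_set_eq, Nat.card_coe_set_eq,
    ncard_compl, ncard_compl, ncard_singleton, ncard_range_of_injective hc, Nat.card_prod,
    Nat.card_fun]

theorem uniformOfFintype_avoiding_pattern_le [DecidableEq ι] [Fintype ι] [Fintype α]
    [Nonempty α] [MeasurableSpace (ι → α)] [DiscreteMeasurableSpace (ι → α)]
    (c : κ × τ → ι) (hc : Injective c) (v : τ → α) :
    (PMF.uniformOfFintype (ι → α)).toMeasure {f | ∀ m, (fun t => f (c (m, t))) ≠ v} ≤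
      (((Nat.card α ^ Nat.card τ - 1 : ℕ) : ℝ≥0∞) / (Nat.card α ^ Nat.card τ : ℕ)) ^
        Nat.card κ := by
  classical
  set q := Nat.card α ^ Nat.card τ
  set r := Nat.card α ^ (Nat.card ι - Nat.card κ * Nat.card τ)
  have h_total : Fintype.card (ι → α) = q ^ Nat.card κ * r := by
    have : Nat.card κ * Nat.card τ ≤ Nat.card ι := by
      simpa [Nat.card_prod] using Nat.card_le_card_of_injective c hc
    rw [Fintype.card_eq_nat_card, Nat.card_fun, ← pow_mul, ← pow_add, mul_comm,
      Nat.add_sub_cancel' this]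
  have hr : (r : ℝ≥0∞) ≠ 0 := by simp [r]
  rw [PMF.toMeasure_uniformOfFintype_apply _ .of_discrete, h_total,
    Fintype.card_eq_nat_card]
  calc _ ≤ (((q - 1) ^ Nat.card κ * r : ℕ) : ℝ≥0∞) / (q ^ Nat.card κ * r : ℕ) := by
        gcongr
        exact card_avoiding_pattern_le c hc v
    _ = _ := by
        rw [Nat.cast_mul, Nat.cast_mul, ENNReal.mul_div_mul_right _ _ hr (by simp),
          Nat.cast_pow, Nat.cast_pow, div_eq_mul_inv, ENNReal.inv_pow, ← mul_pow,
          ← div_eq_mul_inv]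

end BlockPatterns

instance (n : ℕ) : IsProbabilityMeasure (Pn n) :=
  PMF.toMeasure.isProbabilityMeasure _

theorem one_sub_le_prob_of_compl_subset {Ω : Type*} [MeasurableSpace Ω] {μ : Measure Ω}
    [IsProbabilityMeasure μ] {s t : Set Ω} (hs : MeasurableSet s) (hst : sᶜ ⊆ t) :
    1 - μ t ≤ μ s := by
  calc 1 - μ t ≤ 1 - μ sᶜ := tsub_le_tsub_left (measure_mono hst) 1
    _ = μ s := by
      rw [prob_compl_eq_one_sub hs, ENNReal.sub_sub_cancel ENNReal.one_ne_top prob_le_one]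

section Blocks

variable {n : ℕ}

theorem Gn_not_adj_iff_of_lt (ω : Omega n) {u v : Vtx n} (h : u.1 < v.1) :
    ¬ (Gn n ω).Adj u v ↔ ω ⟨(u.1, v.1), h⟩ = code (u.2, v.2) := by
  simp [Gn, h, h.not_gt]

def blockVertex (n : ℕ) (m : Fin (n / 4)) (r : Fin 4) : Fin n :=
  Fin.castLE (Nat.div_mul_le_self n 4) (finProdFinEquiv (m, r))

theorem blockVertex_val (m : Fin (n / 4)) (r : Fin 4) :
    (blockVertex n m r : ℕ) = r + 4 * m := rfl

theorem blockVertex_injective : Injective (uncurry (blockVertex n)) :=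
  (Fin.castLE_injective _).comp finProdFinEquiv.injective

theorem blockVertex_lt_blockVertex (m : Fin (n / 4)) {r s : Fin 4} (h : r < s) :
    blockVertex n m r < blockVertex n m s := by
  simp only [Fin.lt_def, blockVertex_val] at h ⊢
  omega

def blockPair (n : ℕ) (p : Fin (n / 4) × PairIdx 4) : PairIdx n :=
  ⟨(blockVertex n p.1 p.2.1.1, blockVertex n p.1 p.2.1.2), blockVertex_lt_blockVertex p.1 p.2.2⟩

theorem blockPair_injective : Injective (blockPair n) := by
  rintro ⟨m, ⟨⟨r, s⟩, hrs⟩⟩ ⟨m', ⟨⟨r', s'⟩, hrs'⟩⟩ h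
  simp only [blockPair, Subtype.mk.injEq, Prod.mk.injEq] at h
  have hr := blockVertex_injective (a₁ := (m, r)) (a₂ := (m', r')) h.1
  have hs := blockVertex_injective (a₁ := (m, s)) (a₂ := (m', s')) h.2
  simp only [Prod.mk.injEq] at hr hs
  obtain ⟨rfl, rfl⟩ := hr
  obtain ⟨-, rfl⟩ := hs
  rfl

end Blocks

def cycleEdge : Fin 4 → PairIdx 4 :=
  ![⟨(0, 1), by decide⟩, ⟨(1, 2), by decide⟩, ⟨(2, 3), by decide⟩, ⟨(0, 3), by decide⟩]

theorem cycleEdge_injective : Injective cycleEdge := by decide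

-- The last pair is `(i, ℓ)` with `i < ℓ`, so the non-edge `a_ℓ b_i` is the pair `(b_i, a_ℓ)`.
def cyclePattern : Fin 4 → Fin 4 :=
  ![code (false, true), code (false, true), code (false, true), code (true, false)]

theorem exists_cycle_of_block {n : ℕ} (ω : Omega n) (m : Fin (n / 4))
    (h : ∀ t, ω (blockPair n (m, cycleEdge t)) = cyclePattern t) :
    ∃ i j k l : Fin n,
      i ≠ j ∧ i ≠ k ∧ i ≠ l ∧ j ≠ k ∧ j ≠ l ∧ k ≠ l ∧
      ¬ (Gn n ω).Adj (i, false) (j, true) ∧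
      ¬ (Gn n ω).Adj (j, false) (k, true) ∧
      ¬ (Gn n ω).Adj (k, false) (l, true) ∧
      ¬ (Gn n ω).Adj (l, false) (i, true) := by
  have hv := fun r s : Fin 4 => blockVertex_lt_blockVertex (n := n) m (r := r) (s := s)
  refine ⟨blockVertex n m 0, blockVertex n m 1, blockVertex n m 2, blockVertex n m 3,
    (hv 0 1 (by decide)).ne, (hv 0 2 (by decide)).ne, (hv 0 3 (by decide)).ne,
    (hv 1 2 (by decide)).ne, (hv 1 3 (by decide)).ne, (hv 2 3 (by decide)).ne,
    (Gn_not_adj_iff_of_lt ω (hv 0 1 (by decide))).2 (h 0),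
    (Gn_not_adj_iff_of_lt ω (hv 1 2 (by decide))).2 (h 1),
    (Gn_not_adj_iff_of_lt ω (hv 2 3 (by decide))).2 (h 2), ?_⟩
  rw [SimpleGraph.adj_comm]
  exact (Gn_not_adj_iff_of_lt ω (hv 0 3 (by decide))).2 (h 3)

theorem Pn_no_cycle_block_le (n : ℕ) :
    Pn n {ω | ∀ m, (fun t => ω (blockPair n (m, cycleEdge t))) ≠ cyclePattern} ≤
      ((255 : ℝ≥0∞) / 256) ^ (n / 4) := by
  refine (uniformOfFintype_avoiding_pattern_le (α := Fin 4)
    (blockPair n ∘ Prod.map id cycleEdge)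
    (blockPair_injective.comp (injective_id.prodMap cycleEdge_injective))
    cyclePattern).trans_eq ?_
  norm_num

open Filter in
/-- The probability that the random graph `G_n` contains four distinct indices
`i, j, k, ℓ` such that none of the pairs `a_i b_j, a_j b_k, a_k b_ℓ, a_ℓ b_i` is an edge
tends to `1` as `n → ∞`. -/
theorem statement18 :
    Tendsto
      (fun n => Pn n {ω | ∃ i j k l : Fin n,
        i ≠ j ∧ i ≠ k ∧ i ≠ l ∧ j ≠ k ∧ j ≠ l ∧ k ≠ l ∧
        ¬ (Gn n ω).Adj (i, false) (j, true) ∧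
        ¬ (Gn n ω).Adj (j, false) (k, true) ∧
        ¬ (Gn n ω).Adj (k, false) (l, true) ∧
        ¬ (Gn n ω).Adj (l, false) (i, true)})
      atTop (nhds (1 : ℝ≥0∞)) := by
  have h_decay : Tendsto (fun n : ℕ => ((255 : ℝ≥0∞) / 256) ^ (n / 4)) atTop (nhds 0) :=
    (ENNReal.tendsto_pow_atTop_nhds_zero_of_lt_one
      (by rw [ENNReal.div_lt_iff (by norm_num) (by norm_num)]; norm_num)).comp
      (Nat.tendsto_div_const_atTop four_ne_zero)
  refine tendsto_of_tendsto_of_tendsto_of_le_of_le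
    (g := fun n => 1 - ((255 : ℝ≥0∞) / 256) ^ (n / 4)) ?_ tendsto_const_nhds (fun n => ?_)
    (fun _ => prob_le_one)
  · simpa using ENNReal.Tendsto.sub tendsto_const_nhds h_decay (.inl ENNReal.one_ne_top)
  · refine (tsub_le_tsub_left (Pn_no_cycle_block_le n) 1).trans
      (one_sub_le_prob_of_compl_subset .of_discrete fun ω hω m hm => ?_)
    exact hω (exists_cycle_of_block ω m (congrFun hm))
end
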